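/- arXiv:0804.4780 — 2 statements merged into one kernel-verified Lean document; each statement's English description precedes it below -/
import Mathlib

section
/- The map (α, β) ↦ 6π α / β⁴ from (0,∞)² to (0,∞) is surjective but not injective; however, the joint map (α, β) ↦ (6π α/β⁴, 36π² α²/β⁸ + 24π α/β⁵) from (0,∞)² to ℝ² is injective. -/
open Real

lemma eq_and_eq_of_div_pow_eq_of_div_pow_succ_eq {K : Type*} [Field K] {a a' b b' : K} {n : ℕ}
    (ha : a ≠ 0) (hb : b ≠ 0) (hb' : b' ≠ 0) (hn : a / b ^ n = a' / b' ^ n)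
    (hsucc : a / b ^ (n + 1) = a' / b' ^ (n + 1)) : a = a' ∧ b = b' := by
  have hratio : ∀ {c d : K}, d ≠ 0 → c / d ^ n = c / d ^ (n + 1) * d := fun hd => by
    field_simp; ring
  have hq : a / b ^ (n + 1) ≠ 0 := div_ne_zero ha (pow_ne_zero _ hb)
  -- `b` is the ratio of the two quotients
  have hbb' : b = b' := by
    refine mul_left_cancel₀ hq ?_
    rw [← hratio hb, hsucc, ← hratio hb']
    exact hn
  subst hbb'
  exact ⟨(div_left_inj' (pow_ne_zero _ hb)).mp hn, rfl⟩

theorem stmt_12 :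
    (∀ y : ℝ, 0 < y → ∃ α β : ℝ, 0 < α ∧ 0 < β ∧ 6 * π * α / β ^ 4 = y) ∧
    (∃ α β α' β' : ℝ, 0 < α ∧ 0 < β ∧ 0 < α' ∧ 0 < β' ∧ (α, β) ≠ (α', β') ∧
      6 * π * α / β ^ 4 = 6 * π * α' / β' ^ 4) ∧
    (∀ α β α' β' : ℝ, 0 < α → 0 < β → 0 < α' → 0 < β' →
      (6 * π * α / β ^ 4, 36 * π ^ 2 * α ^ 2 / β ^ 8 + 24 * π * α / β ^ 5)
        = (6 * π * α' / β' ^ 4, 36 * π ^ 2 * α' ^ 2 / β' ^ 8 + 24 * π * α' / β' ^ 5) →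
      (α, β) = (α', β')) := by
  refine ⟨fun y _ => ⟨y / (6 * π), 1, by positivity, one_pos, by field_simp⟩,
    ⟨1, 1, 16, 2, one_pos, one_pos, by norm_num, by norm_num, by simp, by norm_num⟩, ?_⟩
  intro α β α' β' hα hβ _ hβ' h
  obtain ⟨h4, h5⟩ := Prod.mk.inj h
  have hsq : ∀ a b : ℝ, 36 * π ^ 2 * a ^ 2 / b ^ 8 = (6 * π * a / b ^ 4) ^ 2 := fun a b => by
    ring
  rw [hsq, hsq, h4, add_right_inj] at h5
  simp only [mul_div_assoc] at h4 h5
  obtain ⟨rfl, rfl⟩ := eq_and_eq_of_div_pow_eq_of_div_pow_succ_eq (n := 4) hα.ne' hβ.ne' hβ'.ne'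
    (mul_right_injective₀ (by positivity) h4) (mul_right_injective₀ (by positivity) h5)
  rfl
end

section
/- Let U : ℝ^p → ℝ be C² with a local minimizer θ̂ (so grad U(θ̂) = 0 and H U(θ̂) positive definite), and let c : ℝ^p → (0,∞) be C¹. For t > 0 define F_t(α) = U(α) − (1/t)·log c(α). Then any critical point θ̃_t of F_t satisfies grad U(θ̃_t) = (1/(t·c(θ̃_t)))·grad c(θ̃_t); and if θ̃_t → θ̂ as t → ∞ with H U continuous and invertible at θ̂, then t·(θ̃_t − θ̂) → (H U(θ̂))⁻¹ · grad c(θ̂)/c(θ̂). -/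
/-!
At a critical point of `U - t⁻¹ log c` the gradient of `U` equals `t⁻¹ c⁻¹ ∇c`, so
`t • ∇U(θ̃_t) → ∇c(θ̂)/c(θ̂)`. Since `∇U(θ̂) = 0` and `D∇U(θ̂) = H` is invertible, the first-order
expansion `∇U(θ) = H (θ - θ̂) + o(θ - θ̂)` can be inverted to `θ - θ̂ = H⁻¹ ∇U(θ) + o(∇U(θ))`;
multiplying by `t` the remainder becomes `o(t • ∇U(θ̃_t)) = o(1)`.
-/

open Filter InnerProductSpace Asymptotics

section Gradient

variable {E : Type*} [NormedAddCommGroup E] [InnerProductSpace ℝ E] [CompleteSpace E]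

theorem ContDiff.contDiff_gradient {f : E → ℝ} {n : WithTop ℕ∞} (hf : ContDiff ℝ (n + 1) f) :
    ContDiff ℝ n (gradient f) :=
  (toDual ℝ E).symm.contDiff.comp (hf.fderiv_right le_rfl)

theorem HasGradientAt.sub_const_mul_log {U c : E → ℝ} {x gU gc : E} (hU : HasGradientAt U gU x)
    (hc : HasGradientAt c gc x) (hx : c x ≠ 0) (s : ℝ) :
    HasGradientAt (fun α => U α - s * Real.log (c α)) (gU - (s / c x) • gc) x := by
  rw [hasGradientAt_iff_hasFDerivAt] at *
  refine (hU.sub ((hc.log hx).const_mul s)).congr_fderiv ?_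
  ext v
  simp only [map_sub, map_smul, FunLike.coe_sub, FunLike.coe_smul,
    Pi.sub_apply, Pi.smul_apply, smul_eq_mul]
  ring

theorem gradient_sub_const_mul_log_eq_zero_iff {U c : E → ℝ} {x : E} (hU : DifferentiableAt ℝ U x)
    (hc : DifferentiableAt ℝ c x) (hx : c x ≠ 0) (s : ℝ) :
    gradient (fun α => U α - s * Real.log (c α)) x = 0 ↔
      gradient U x = (s / c x) • gradient c x := by
  rw [(hU.hasGradientAt.sub_const_mul_log hc.hasGradientAt hx s).gradient, sub_eq_zero]

end Gradient

section Inversion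

variable {𝕜 E F α : Type*} [NontriviallyNormedField 𝕜] [NormedAddCommGroup E] [NormedSpace 𝕜 E]
  [NormedAddCommGroup F] [NormedSpace 𝕜 F] {f : E → F} {L : E ≃L[𝕜] F} {x₀ : E}

theorem HasFDerivAt.isLittleO_symm_apply_sub_sub (hf : HasFDerivAt f (L : E →L[𝕜] F) x₀)
    (hx₀ : f x₀ = 0) : (fun x => L.symm (f x) - (x - x₀)) =o[nhds x₀] fun x => L.symm (f x) := by
  have hg : HasFDerivAt (fun x => L.symm (f x)) (ContinuousLinearMap.id 𝕜 E) x₀ := by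
    simpa [Function.comp_def] using L.symm.hasFDerivAt.comp x₀ hf
  have hrem : (fun x => L.symm (f x) - (x - x₀)) =o[nhds x₀] fun x => x - x₀ := by
    simpa [hx₀] using hg.isLittleO
  exact hrem.trans_isBigO (by simpa using hrem.right_isBigO_add)

theorem HasFDerivAt.tendsto_smul_sub_of_tendsto_smul_apply (hf : HasFDerivAt f (L : E →L[𝕜] F) x₀)
    (hx₀ : f x₀ = 0) {l : Filter α} {s : α → 𝕜} {θ : α → E} {y : F}
    (hθ : Tendsto θ l (nhds x₀)) (hy : Tendsto (fun a => s a • f (θ a)) l (nhds y)) :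
    Tendsto (fun a => s a • (θ a - x₀)) l (nhds (L.symm y)) := by
  have hrem : Tendsto (fun a => L.symm (s a • f (θ a)) - s a • (θ a - x₀)) l (nhds 0) := by
    rw [← isLittleO_one_iff ℝ]
    have := (isBigO_refl s l).smul_isLittleO
      ((hf.isLittleO_symm_apply_sub_sub hx₀).comp_tendsto hθ)
    refine (this.trans_isBigO ?_).congr_left fun a => ?_
    · simpa using ((L.symm : F →L[𝕜] E).continuous.tendsto y).comp hy |>.isBigO_one ℝ
    · simp [smul_sub]
  simpa using (((L.symm : F →L[𝕜] E).continuous.tendsto y).comp hy).sub hrem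

end Inversion

theorem stmt_18_general (p : ℕ) (U c : EuclideanSpace ℝ (Fin p) → ℝ)
    (hU : ContDiff ℝ 2 U) (hc : ContDiff ℝ 1 c) (hcpos : ∀ x, 0 < c x)
    (θhat : EuclideanSpace ℝ (Fin p))
    (hcrit : gradient U θhat = 0)
    -- `H'` is the (invertible) Hessian of `U` at `θ̂`
    (H' : EuclideanSpace ℝ (Fin p) ≃L[ℝ] EuclideanSpace ℝ (Fin p))
    (hH' : (H' : EuclideanSpace ℝ (Fin p) →L[ℝ] EuclideanSpace ℝ (Fin p))
      = fderiv ℝ (gradient U) θhat) :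
    -- first-order condition for any critical point of the penalized contrast
    (∀ t : ℝ, 0 < t → ∀ θ : EuclideanSpace ℝ (Fin p),
      gradient (fun α => U α - (1 / t) * Real.log (c α)) θ = 0 →
      gradient U θ = (1 / (t * c θ)) • gradient c θ) ∧
    -- asymptotic deviation of the penalized critical points
    (∀ θt : ℝ → EuclideanSpace ℝ (Fin p),
      (∀ t : ℝ, 0 < t →
        gradient (fun α => U α - (1 / t) * Real.log (c α)) (θt t) = 0) →
      Tendsto θt atTop (nhds θhat) →
      Tendsto (fun t : ℝ => t • (θt t - θhat)) atTop
        (nhds (H'.symm ((c θhat)⁻¹ • gradient c θhat)))) := by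
  have first_order : ∀ t θ, gradient (fun α => U α - (1 / t) * Real.log (c α)) θ = 0 →
      gradient U θ = (1 / t / c θ) • gradient c θ := fun t θ =>
    (gradient_sub_const_mul_log_eq_zero_iff (hU.differentiable two_ne_zero θ)
      (hc.differentiable one_ne_zero θ) (hcpos θ).ne' _).mp
  refine ⟨fun t _ θ hθ => by rw [first_order t θ hθ, div_div], fun θt hθt hlim => ?_⟩
  have hgradU : HasFDerivAt (gradient U) (H' : _ →L[ℝ] _) θhat := by
    rw [hH']
    exact ((hU.contDiff_gradient (n := 1)).differentiable one_ne_zero θhat).hasFDerivAt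
  have hscaled : (fun t : ℝ => (c (θt t))⁻¹ • gradient c (θt t)) =ᶠ[atTop]
      fun t => t • gradient U (θt t) := by
    filter_upwards [eventually_gt_atTop 0] with t ht
    rw [first_order t _ (hθt t ht), smul_smul]
    field_simp
  have hpenalty : Continuous fun x => (c x)⁻¹ • gradient c x :=
    (hc.continuous.inv₀ fun x => (hcpos x).ne').smul
      ((hc.contDiff_gradient (n := 0)).continuous)
  exact hgradU.tendsto_smul_sub_of_tendsto_smul_apply hcrit hlim
    (((hpenalty.tendsto θhat).comp hlim).congr' hscaled)

theorem stmt_18 (p : ℕ) (U c : EuclideanSpace ℝ (Fin p) → ℝ)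
    (hU : ContDiff ℝ 2 U) (hc : ContDiff ℝ 1 c) (hcpos : ∀ x, 0 < c x)
    (θhat : EuclideanSpace ℝ (Fin p))
    (hcrit : gradient U θhat = 0)
    (hHpos : ∀ v : EuclideanSpace ℝ (Fin p), v ≠ 0 →
      0 < (inner ℝ (fderiv ℝ (gradient U) θhat v) v : ℝ))
    -- `H'` is the (invertible) Hessian of `U` at `θ̂`
    (H' : EuclideanSpace ℝ (Fin p) ≃L[ℝ] EuclideanSpace ℝ (Fin p))
    (hH' : (H' : EuclideanSpace ℝ (Fin p) →L[ℝ] EuclideanSpace ℝ (Fin p))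
      = fderiv ℝ (gradient U) θhat)
    (hHcont : Continuous fun x => fderiv ℝ (gradient U) x) :
    -- first-order condition for any critical point of the penalized contrast
    (∀ t : ℝ, 0 < t → ∀ θ : EuclideanSpace ℝ (Fin p),
      gradient (fun α => U α - (1 / t) * Real.log (c α)) θ = 0 →
      gradient U θ = (1 / (t * c θ)) • gradient c θ) ∧
    -- asymptotic deviation of the penalized critical points
    (∀ θt : ℝ → EuclideanSpace ℝ (Fin p),
      (∀ t : ℝ, 0 < t →
        gradient (fun α => U α - (1 / t) * Real.log (c α)) (θt t) = 0) →
      Tendsto θt atTop (nhds θhat) →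
      Tendsto (fun t : ℝ => t • (θt t - θhat)) atTop
        (nhds (H'.symm ((c θhat)⁻¹ • gradient c θhat)))) :=
  stmt_18_general p U c hU hc hcpos θhat hcrit H' hH'
end
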